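/- For the (α,0) case with 0 < α < 1, the decrement matrix q(n:m) of the regenerative composition structure satisfies q(n:m) = h(m) for m < n and q(n:n) = (1−α)_{n−1}/(n−1)!, where h(m) = α(1−α)_{m−1}/m!; in particular ∑_{m=1}^{n−1} h(m) + (1−α)_{n−1}/(n−1)! = 1 for every n ≥ 1. -/

import Mathlib

/-- Rising factorial `(z)_k = z (z+1) ⋯ (z+k-1)`. -/
noncomputable def rpoch (z : ℝ) (k : ℕ) : ℝ := ∏ i ∈ Finset.range k, (z + i)

/-- Laplace exponent of the `(α,0)` regenerative composition structure:
`Φ(n) = n!/(1−α)_n` for `n ≥ 1`, `Φ(0) = 0`. -/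
noncomputable def PhiAlpha (α : ℝ) (n : ℕ) : ℝ :=
  if n = 0 then 0 else (n.factorial : ℝ) / rpoch (1 - α) n

/-- Binomial moments `Φ(n:m) = C(n,m) ∑_{j=0}^m (−1)^{j+1} C(m,j) Φ(n−m+j)`. -/
noncomputable def PhiAlphaNM (α : ℝ) (n m : ℕ) : ℝ :=
  (n.choose m : ℝ) * ∑ j ∈ Finset.range (m + 1),
    (-1 : ℝ) ^ (j + 1) * (m.choose j : ℝ) * PhiAlpha α (n - m + j)

/-!
The signed binomial sums defining `Φ(n:m)` are iterated forward differences. Writing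
`F_c(a) = a!/(1-α)_{a+c}`, one has `Δ F_c = (α - c) F_{c+1}`, so `Δ^m F_0 = (α)↓_m F_m` with
the falling factorial `(α)↓_m = α (-1)^{m-1} (1-α)_{m-1}`; since `Φ = F_0` away from `0`,
this gives `q(n:m) = h(m)` for `m < n`. For `m = n` the sum also sees `Φ(0) = 0 ≠ F_0(0) = 1`,
which adds `(1-α)_n/n!`, the tail `h(n) + h(n+1) + ⋯`, since
`h(k+1) = (1-α)_k/k! - (1-α)_{k+1}/(k+1)!`.
-/

open Finset
open Polynomial
open scoped Nat

lemma rpoch_eq_ascPochhammer_eval (z : ℝ) (k : ℕ) :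
    rpoch z k = (ascPochhammer ℝ k).eval z := by
  induction k with
  | zero => simp [rpoch]
  | succ k ih => rw [rpoch, prod_range_succ, ← rpoch, ih, ascPochhammer_succ_eval]

lemma rpoch_succ (z : ℝ) (k : ℕ) : rpoch z (k + 1) = rpoch z k * (z + k) :=
  prod_range_succ _ _

lemma rpoch_pos {z : ℝ} (hz : 0 < z) (k : ℕ) : 0 < rpoch z k :=
  prod_pos fun i _ => by positivity

lemma sum_range_neg_one_pow_mul_choose_mul_eq_fwdDiff_iter {R : Type*} [CommRing R]
    (f : ℕ → R) (m a : ℕ) :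
    ∑ j ∈ range (m + 1), (-1 : R) ^ (j + 1) * (m.choose j : R) * f (a + j) =
      -(-1) ^ m * (fwdDiff 1)^[m] f a := by
  rw [fwdDiff_iter_eq_sum_shift, mul_sum]
  refine sum_congr rfl fun j hj => ?_
  obtain ⟨d, rfl⟩ := Nat.exists_eq_add_of_le (Nat.lt_succ_iff.mp (mem_range.mp hj))
  have hsq : ((-1 : R) ^ d) ^ 2 = 1 := by rw [← pow_mul, pow_mul', neg_one_sq, one_pow]
  simp only [Nat.add_sub_cancel_left, zsmul_eq_mul, smul_eq_mul, mul_one]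
  push_cast
  linear_combination ((-1 : R) ^ j * (j + d).choose j * f (a + j)) * hsq

noncomputable def factorialDivRpoch (α : ℝ) (c a : ℕ) : ℝ := a ! / rpoch (1 - α) (a + c)

section factorialDivRpoch

variable {α : ℝ}

lemma fwdDiff_factorialDivRpoch (hα : α < 1) (c : ℕ) :
    fwdDiff 1 (factorialDivRpoch α c) = (α - c) • factorialDivRpoch α (c + 1) := by
  funext a
  have hr : 0 < rpoch (1 - α) (a + c) := rpoch_pos (by linarith) _
  have hd : (0 : ℝ) < 1 - α + (a + c) := add_pos_of_pos_of_nonneg (by linarith) (by positivity)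
  simp only [fwdDiff, factorialDivRpoch, Pi.smul_apply, smul_eq_mul,
    show a + 1 + c = a + c + 1 by ring, show a + (c + 1) = a + c + 1 by ring, rpoch_succ,
    Nat.factorial_succ]
  push_cast
  field_simp
  ring

lemma fwdDiff_iter_factorialDivRpoch (hα : α < 1) (m c : ℕ) :
    (fwdDiff 1)^[m] (factorialDivRpoch α c) =
      (descPochhammer ℝ m).eval (α - c) • factorialDivRpoch α (c + m) := by
  induction m generalizing c with
  | zero => simp
  | succ m ih =>
    rw [Function.iterate_succ_apply, fwdDiff_factorialDivRpoch hα, fwdDiff_iter_const_smul, ih,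
      smul_smul, descPochhammer_succ_left, add_right_comm, add_assoc]
    simp only [eval_mul, eval_X, eval_comp, eval_sub, eval_one, Nat.cast_add, Nat.cast_one]
    ring_nf

lemma sum_neg_one_pow_mul_choose_mul_factorialDivRpoch (hα : α < 1) (k a : ℕ) :
    ∑ j ∈ range (k + 2), (-1 : ℝ) ^ (j + 1) * ((k + 1).choose j : ℝ) *
        factorialDivRpoch α 0 (a + j) =
      α * rpoch (1 - α) k * factorialDivRpoch α (k + 1) a := by
  have hdesc : (descPochhammer ℝ k).eval (α - 1) = (-1) ^ k * rpoch (1 - α) k := by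
    rw [rpoch_eq_ascPochhammer_eval, show 1 - α = -(α - 1) by ring,
      ascPochhammer_eval_neg_eq_descPochhammer, ← mul_assoc, ← mul_pow]
    simp
  rw [sum_range_neg_one_pow_mul_choose_mul_eq_fwdDiff_iter, fwdDiff_iter_factorialDivRpoch hα,
    Pi.smul_apply, smul_eq_mul, descPochhammer_succ_left]
  simp only [eval_mul, eval_X, eval_comp, eval_sub, eval_one, Nat.cast_zero, sub_zero, hdesc,
    zero_add]
  have hsq : ((-1 : ℝ) ^ k) ^ 2 = 1 := by rw [← pow_mul, pow_mul', neg_one_sq, one_pow]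
  linear_combination (α * rpoch (1 - α) k * factorialDivRpoch α (k + 1) a) * hsq

end factorialDivRpoch

noncomputable def stepDistrib (α : ℝ) (m : ℕ) : ℝ := α * rpoch (1 - α) (m - 1) / m !

noncomputable def stepTail (α : ℝ) (k : ℕ) : ℝ := rpoch (1 - α) k / k !

lemma stepDistrib_succ_add_stepTail_succ (α : ℝ) (k : ℕ) :
    stepDistrib α (k + 1) + stepTail α (k + 1) = stepTail α k := by
  simp only [stepDistrib, stepTail, Nat.add_sub_cancel, rpoch_succ, Nat.factorial_succ]
  push_cast
  field_simp
  ring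

lemma sum_stepDistrib_add_stepTail (α : ℝ) (k : ℕ) :
    ∑ m ∈ Icc 1 k, stepDistrib α m + stepTail α k = 1 := by
  induction k with
  | zero => simp [stepTail, rpoch]
  | succ k ih =>
    rw [sum_Icc_succ_top (by omega), add_assoc, stepDistrib_succ_add_stepTail_succ, ih]

lemma PhiAlpha_eq_factorialDivRpoch_sub (α : ℝ) (i : ℕ) :
    PhiAlpha α i = factorialDivRpoch α 0 i - if i = 0 then 1 else 0 := by
  rcases eq_or_ne i 0 with rfl | hi
  · simp [PhiAlpha, factorialDivRpoch, rpoch]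
  · simp [PhiAlpha, factorialDivRpoch, hi]

lemma sum_neg_one_pow_mul_choose_mul_PhiAlpha {α : ℝ} (hα : α < 1) (k a : ℕ) :
    ∑ j ∈ range (k + 2), (-1 : ℝ) ^ (j + 1) * ((k + 1).choose j : ℝ) * PhiAlpha α (a + j) =
      α * rpoch (1 - α) k * factorialDivRpoch α (k + 1) a + if a = 0 then 1 else 0 := by
  simp only [PhiAlpha_eq_factorialDivRpoch_sub, mul_sub, sum_sub_distrib,
    sum_neg_one_pow_mul_choose_mul_factorialDivRpoch hα, Nat.add_eq_zero_iff]
  rw [sum_eq_single_of_mem 0 (by simp) fun j _ hj => by simp [hj]]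
  split_ifs <;> simp_all

lemma PhiAlphaNM_div_PhiAlpha {α : ℝ} (hα : α < 1) {n m : ℕ} (hm : 1 ≤ m) (hmn : m ≤ n) :
    PhiAlphaNM α n m / PhiAlpha α n = stepDistrib α m + if m = n then stepTail α n else 0 := by
  obtain ⟨k, rfl⟩ := Nat.exists_eq_add_of_le' hm
  obtain ⟨a, rfl⟩ := Nat.exists_eq_add_of_le' hmn
  have hr : 0 < rpoch (1 - α) (a + (k + 1)) := rpoch_pos (by linarith) _
  rw [PhiAlphaNM, Nat.add_sub_cancel, sum_neg_one_pow_mul_choose_mul_PhiAlpha hα, PhiAlpha,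
    if_neg (by omega : a + (k + 1) ≠ 0)]
  simp only [factorialDivRpoch, stepDistrib, stepTail, Nat.add_sub_cancel]
  rcases eq_or_ne a 0 with rfl | ha
  · simp only [zero_add, Nat.choose_self, Nat.factorial_zero, Nat.cast_one, if_true] at hr ⊢
    field_simp
  · have hfac : ((a + (k + 1)).choose (k + 1) : ℝ) * a ! * (k + 1)! = (a + (k + 1))! := by
      exact_mod_cast Nat.add_choose_mul_factorial_mul_factorial a (k + 1)
    rw [if_neg ha, if_neg (by omega), add_zero, add_zero]
    field_simp
    linear_combination α * rpoch (1 - α) k * hfac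

theorem alpha_zero_decrement_general (α : ℝ) (h1 : α < 1) (n : ℕ) (hn : 1 ≤ n) :
    (∀ m : ℕ, 1 ≤ m → m < n →
      PhiAlphaNM α n m / PhiAlpha α n = α * rpoch (1 - α) (m - 1) / (m.factorial : ℝ)) ∧
    PhiAlphaNM α n n / PhiAlpha α n = rpoch (1 - α) (n - 1) / ((n - 1).factorial : ℝ) ∧
    (∑ m ∈ Finset.Icc 1 (n - 1), α * rpoch (1 - α) (m - 1) / (m.factorial : ℝ)) +
      rpoch (1 - α) (n - 1) / ((n - 1).factorial : ℝ) = 1 := by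
  obtain ⟨k, rfl⟩ := Nat.exists_eq_add_of_le' hn
  refine ⟨fun m hm hmn => ?_, ?_, sum_stepDistrib_add_stepTail α (k + 1 - 1)⟩
  · rw [PhiAlphaNM_div_PhiAlpha h1 hm hmn.le, if_neg hmn.ne, add_zero]
    rfl
  · rw [PhiAlphaNM_div_PhiAlpha h1 hn le_rfl, if_pos rfl, stepDistrib_succ_add_stepTail_succ]
    rfl

/-- For the `(α,0)` case with `0 < α < 1`, the decrement matrix
`q(n:m) = Φ(n:m)/Φ(n)` satisfies `q(n:m) = h(m) = α(1−α)_{m−1}/m!` for `m < n`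
and `q(n:n) = (1−α)_{n−1}/(n−1)!`; in particular
`∑_{m=1}^{n−1} h(m) + (1−α)_{n−1}/(n−1)! = 1`. -/
theorem alpha_zero_decrement (α : ℝ) (h0 : 0 < α) (h1 : α < 1) (n : ℕ) (hn : 1 ≤ n) :
    (∀ m : ℕ, 1 ≤ m → m < n →
      PhiAlphaNM α n m / PhiAlpha α n = α * rpoch (1 - α) (m - 1) / (m.factorial : ℝ)) ∧
    PhiAlphaNM α n n / PhiAlpha α n = rpoch (1 - α) (n - 1) / ((n - 1).factorial : ℝ) ∧
    (∑ m ∈ Finset.Icc 1 (n - 1), α * rpoch (1 - α) (m - 1) / (m.factorial : ℝ)) +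
      rpoch (1 - α) (n - 1) / ((n - 1).factorial : ℝ) = 1 :=
  alpha_zero_decrement_general α h1 n hn
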